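/- arXiv:1908.01154 — 4 statements merged into one kernel-verified Lean document; each statement's English description precedes it below -/
import Mathlib

section
/- Let γ : [0,∞) → [0,∞) be a non-decreasing concave function, not identically zero. Then the function Φ_γ(p) = ( (1/Γ(1+p)) ∫₀^∞ γ(r)^p e^{-r} dr )^{1/p} is non-increasing in p on (-1, 0) ∪ (0, ∞). -/
open Real MeasureTheory Set

/-!
Put `c = Φ_γ(p)`. Since `∫₀^∞ r^t e^{-r} dr = Γ(1+t)`, the linear function `r ↦ c r` has
`Φ ≡ c`, and `γ` has the same `p`-th moment as it. Concavity and `γ(0) ≥ 0` make `γ(r)/r`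
non-increasing, so `γ - c r` changes sign at most once, at some `s`: `γ ≥ c r` before, `γ ≤ c r`
after. Convexity of `t ↦ u^t` gives, for `x, y > 0` and `p ≤ q`, the pointwise bound
`(x^q - y^q)/q ≤ x^(q-p) (x^p - y^p)/p`; because `γ` is monotone and `(x^p - y^p)/p` has the sign of
`x - y`, the factor `γ(r)^(q-p)` may be replaced by the constant `γ(s)^(q-p)`. Integrating against
`e^{-r}` gives `(∫ γ^q e^{-r} - c^q Γ(1+q))/q ≤ 0`, i.e. `Φ_γ(q) ≤ c`.
-/

lemma rpow_sub_one_div_le_of_le {u p q : ℝ} (hu : 0 < u) (hp : p ≠ 0) (hq : q ≠ 0)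
    (hpq : p ≤ q) : (u ^ p - 1) / p ≤ (u ^ q - 1) / q := by
  simpa using (convexOn_rpow_left hu).secant_mono (mem_univ 0) (mem_univ p) (mem_univ q)
    hp hq hpq

lemma rpow_sub_rpow_div_le {x y p q : ℝ} (hx : 0 < x) (hy : 0 < y) (hp : p ≠ 0) (hq : q ≠ 0)
    (hpq : p ≤ q) : (x ^ q - y ^ q) / q ≤ x ^ (q - p) * ((x ^ p - y ^ p) / p) := by
  have h := rpow_sub_one_div_le_of_le (div_pos hy hx) hp hq hpq
  rw [div_rpow hy.le hx.le, div_rpow hy.le hx.le] at h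
  have hxp := rpow_pos_of_pos hx p
  have hxq := rpow_pos_of_pos hx q
  calc (x ^ q - y ^ q) / q = -(x ^ q * ((y ^ q / x ^ q - 1) / q)) := by field_simp; ring
    _ ≤ -(x ^ q * ((y ^ p / x ^ p - 1) / p)) := neg_le_neg (by gcongr)
    _ = x ^ (q - p) * ((x ^ p - y ^ p) / p) := by rw [rpow_sub hx]; field_simp; ring

lemma rpow_sub_rpow_div_nonneg {x y : ℝ} (p : ℝ) (hy : 0 < y) (hyx : y ≤ x) :
    0 ≤ (x ^ p - y ^ p) / p := by
  rcases lt_trichotomy p 0 with hp | rfl | hp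
  · exact div_nonneg_of_nonpos (sub_nonpos.2 (rpow_le_rpow_of_nonpos hy hyx hp.le)) hp.le
  · simp
  · exact div_nonneg (sub_nonneg.2 (rpow_le_rpow hy.le hyx hp.le)) hp.le

lemma rpow_mul_rpow_sub_rpow_div_le {x y x₀ p q : ℝ} (hx : 0 < x) (hy : 0 < y) (hx₀ : 0 ≤ x₀)
    (hpq : p ≤ q) (hcross : x ≤ x₀ ∧ y ≤ x ∨ x₀ ≤ x ∧ x ≤ y) :
    x ^ (q - p) * ((x ^ p - y ^ p) / p) ≤ x₀ ^ (q - p) * ((x ^ p - y ^ p) / p) := by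
  rcases hcross with ⟨hxx₀, hyx⟩ | ⟨hx₀x, hxy⟩
  · exact mul_le_mul_of_nonneg_right (rpow_le_rpow hx.le hxx₀ (sub_nonneg.2 hpq))
      (rpow_sub_rpow_div_nonneg p hy hyx)
  · have h := rpow_sub_rpow_div_nonneg p hx hxy
    rw [← neg_sub, neg_div, neg_nonneg] at h
    exact mul_le_mul_of_nonpos_right (rpow_le_rpow hx₀ hx₀x (sub_nonneg.2 hpq)) h

lemma one_div_mul_rpow_one_div_le {a c q G : ℝ} (ha : 0 ≤ a) (hG : 0 < G) (hc : 0 < c)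
    (hq : q ≠ 0) (h : (a - c ^ q * G) / q ≤ 0) : (1 / G * a) ^ (1 / q) ≤ c := by
  have hcq : (c ^ q) ^ (1 / q) = c := by rw [one_div, rpow_rpow_inv hc.le hq]
  have h' : (1 / G * a - c ^ q) / q ≤ 0 := by
    rw [show (1 / G * a - c ^ q) / q = (a - c ^ q * G) / q / G by field_simp]
    exact div_nonpos_of_nonpos_of_nonneg h hG.le
  rcases hq.lt_or_gt with hq | hq
  · have hle : c ^ q ≤ 1 / G * a := by linarith [(div_le_iff_of_neg hq).1 h']
    exact hcq ▸ rpow_le_rpow_of_nonpos (rpow_pos_of_pos hc q) hle (one_div_neg.2 hq).le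
  · have hle : 1 / G * a ≤ c ^ q := by linarith [(div_le_iff₀ hq).1 h']
    exact hcq ▸ rpow_le_rpow (by positivity) hle (one_div_pos.2 hq).le

lemma ConcaveOn.antitoneOn_div_self {f : ℝ → ℝ} (hf : ConcaveOn ℝ (Ici 0) f) (h0 : 0 ≤ f 0) :
    AntitoneOn (fun r => f r / r) (Ioi 0) := by
  intro x (hx : 0 < x) y (hy : 0 < y) hxy
  have h := hf.neg.secant_mono self_mem_Ici hx.le hy.le hx.ne' hy.ne' hxy
  simp only [Pi.neg_apply, sub_zero] at h
  have h0xy : f 0 / y ≤ f 0 / x := div_le_div_of_nonneg_left h0 hx hxy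
  simp only [neg_sub_neg, sub_div] at h ⊢
  linarith

lemma AntitoneOn.forall_le_or_exists_crossing {g : ℝ → ℝ} (hg : AntitoneOn g (Ioi 0)) (c : ℝ) :
    (∀ r, 0 < r → c ≤ g r) ∨
      ∃ s, 0 ≤ s ∧ ∀ r, 0 < r → (r < s → c ≤ g r) ∧ (s < r → g r ≤ c) := by
  by_cases hall : ∀ r, 0 < r → c ≤ g r
  · exact Or.inl hall
  right
  push Not at hall
  set N := {r | 0 < r ∧ g r < c}
  have hN : N.Nonempty := hall
  have hNbdd : BddBelow N := ⟨0, fun r hr => hr.1.le⟩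
  refine ⟨sInf N, le_csInf hN fun r hr => hr.1.le, fun r hr => ⟨fun hrs => ?_, fun hsr => ?_⟩⟩
  · by_contra! hgr
    exact notMem_of_lt_csInf hrs hNbdd ⟨hr, hgr⟩
  · obtain ⟨r₁, ⟨hr₁, hgr₁⟩, hr₁r⟩ := exists_lt_of_csInf_lt hN hsr
    exact (hg hr₁ hr hr₁r.le).trans hgr₁.le

lemma ConcaveOn.forall_le_or_exists_crossing {f : ℝ → ℝ} (hf : ConcaveOn ℝ (Ici 0) f)
    (h0 : 0 ≤ f 0) (c : ℝ) :
    (∀ r, 0 < r → c * r ≤ f r) ∨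
      ∃ s, 0 ≤ s ∧ ∀ r, 0 < r → (r < s → c * r ≤ f r) ∧ (s < r → f r ≤ c * r) := by
  refine ((hf.antitoneOn_div_self h0).forall_le_or_exists_crossing c).imp
    (fun h r hr => (le_div_iff₀ hr).1 (h r hr)) fun ⟨s, hs, h⟩ => ⟨s, hs, fun r hr => ?_⟩
  exact ⟨fun hrs => (le_div_iff₀ hr).1 ((h r hr).1 hrs),
    fun hsr => (div_le_iff₀ hr).1 ((h r hr).2 hsr)⟩

lemma ConcaveOn.pos_of_monotoneOn {f : ℝ → ℝ} (hf : ConcaveOn ℝ (Ici 0) f)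
    (hmono : MonotoneOn f (Ici 0)) (h0 : 0 ≤ f 0) {t : ℝ} (ht : 0 ≤ t) (hft : 0 < f t)
    {r : ℝ} (hr : 0 < r) : 0 < f r := by
  rcases le_or_gt t r with htr | hrt
  · exact hft.trans_le (hmono ht hr.le htr)
  · have ht' := hr.trans hrt
    have hslope : f t / t ≤ f r / r := hf.antitoneOn_div_self h0 hr ht' hrt.le
    exact (div_pos_iff_of_pos_right hr).1 ((div_pos hft ht').trans_le hslope)

lemma integrableOn_rpow_mul_exp_neg {t : ℝ} (ht : -1 < t) :
    IntegrableOn (fun r : ℝ => r ^ t * exp (-r)) (Ioi 0) := by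
  simpa using integrableOn_rpow_mul_exp_neg_rpow ht one_pos

lemma integral_rpow_mul_exp_neg {t : ℝ} (ht : -1 < t) :
    ∫ r in Ioi (0:ℝ), r ^ t * exp (-r) = Gamma (1 + t) := by
  simpa [add_comm] using integral_rpow_mul_exp_neg_rpow one_pos ht

lemma setIntegral_Ioi_pos {f : ℝ → ℝ} (hf : ∀ r ∈ Ioi (0:ℝ), 0 < f r)
    (hint : IntegrableOn f (Ioi 0)) : 0 < ∫ r in Ioi (0:ℝ), f r := by
  rw [setIntegral_pos_iff_support_of_nonneg_ae
      (ae_restrict_of_forall_mem measurableSet_Ioi fun r hr => (hf r hr).le) hint,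
    inter_eq_right.2 fun r hr => Function.mem_support.2 (hf r hr).ne', volume_Ioi]
  exact ENNReal.zero_lt_top

/-- Dividing by `t` makes the sign of the gap that of `γ r - c r`, whatever the sign of `t`. -/
noncomputable def rpowGap (γ : ℝ → ℝ) (c t r : ℝ) : ℝ := (γ r ^ t - (c * r) ^ t) / t * exp (-r)

section rpowGap

variable {γ : ℝ → ℝ} {c t : ℝ}

lemma eqOn_rpowGap (hc : 0 ≤ c) :
    EqOn (rpowGap γ c t) (fun r => (γ r ^ t * exp (-r) - c ^ t * (r ^ t * exp (-r))) / t)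
      (Ioi 0) := fun r (hr : 0 < r) => by
  rw [rpowGap, mul_rpow hc hr.le]; ring

lemma integrableOn_rpowGap (hc : 0 ≤ c) (ht : -1 < t)
    (hγ : IntegrableOn (fun r => γ r ^ t * exp (-r)) (Ioi 0)) :
    IntegrableOn (rpowGap γ c t) (Ioi 0) :=
  IntegrableOn.congr_fun ((hγ.sub ((integrableOn_rpow_mul_exp_neg ht).const_mul _)).div_const t)
    (eqOn_rpowGap hc).symm measurableSet_Ioi

lemma integral_rpowGap (hc : 0 ≤ c) (ht : -1 < t)
    (hγ : IntegrableOn (fun r => γ r ^ t * exp (-r)) (Ioi 0)) :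
    ∫ r in Ioi (0:ℝ), rpowGap γ c t r =
      ((∫ r in Ioi (0:ℝ), γ r ^ t * exp (-r)) - c ^ t * Gamma (1 + t)) / t := by
  rw [setIntegral_congr_fun measurableSet_Ioi (eqOn_rpowGap hc), integral_div,
    integral_sub hγ ((integrableOn_rpow_mul_exp_neg ht).const_mul _), integral_const_mul,
    integral_rpow_mul_exp_neg ht]

variable {p q : ℝ}

lemma rpowGap_le_rpow_mul_rpowGap {r : ℝ} (hγ : 0 < γ r) (hc : 0 < c) (hr : 0 < r) (hp : p ≠ 0)
    (hq : q ≠ 0) (hpq : p ≤ q) : rpowGap γ c q r ≤ γ r ^ (q - p) * rpowGap γ c p r := by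
  rw [rpowGap, rpowGap, ← mul_assoc]
  exact mul_le_mul_of_nonneg_right (rpow_sub_rpow_div_le hγ (mul_pos hc hr) hp hq hpq)
    (exp_pos _).le

lemma exists_ae_rpow_mul_rpowGap_le (hconc : ConcaveOn ℝ (Ici 0) γ)
    (hmono : MonotoneOn γ (Ici 0)) (hγ0 : 0 ≤ γ 0) (hγ : ∀ r ∈ Ioi (0:ℝ), 0 < γ r)
    (hc : 0 < c) (hpq : p ≤ q) (hint : IntegrableOn (rpowGap γ c p) (Ioi 0))
    (hzero : ∫ r in Ioi (0:ℝ), rpowGap γ c p r = 0) :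
    ∃ W, ∀ᵐ r ∂volume.restrict (Ioi 0), γ r ^ (q - p) * rpowGap γ c p r ≤ W * rpowGap γ c p r := by
  rcases hconc.forall_le_or_exists_crossing hγ0 c with hall | ⟨s, hs, hcross⟩
  · have hnonneg : 0 ≤ᵐ[volume.restrict (Ioi 0)] rpowGap γ c p :=
      ae_restrict_of_forall_mem measurableSet_Ioi fun r (hr : 0 < r) =>
        mul_nonneg (rpow_sub_rpow_div_nonneg p (mul_pos hc hr) (hall r hr)) (exp_pos _).le
    refine ⟨0, ?_⟩
    filter_upwards [(integral_eq_zero_iff_of_nonneg_ae hnonneg hint).1 hzero] with r hr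
    simp [hr]
  · refine ⟨γ s ^ (q - p), ae_restrict_of_forall_mem measurableSet_Ioi fun r (hr : 0 < r) => ?_⟩
    have hside : γ r ≤ γ s ∧ c * r ≤ γ r ∨ γ s ≤ γ r ∧ γ r ≤ c * r := by
      rcases lt_trichotomy r s with hrs | rfl | hsr
      · exact Or.inl ⟨hmono hr.le hs hrs.le, (hcross r hr).1 hrs⟩
      · exact (le_total (c * r) (γ r)).imp (⟨le_rfl, ·⟩) (⟨le_rfl, ·⟩)
      · exact Or.inr ⟨hmono hs hr.le hsr.le, (hcross r hr).2 hsr⟩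
    simp only [rpowGap, ← mul_assoc]
    exact mul_le_mul_of_nonneg_right (rpow_mul_rpow_sub_rpow_div_le (hγ r hr) (mul_pos hc hr)
      (hγ0.trans (hmono self_mem_Ici hs hs)) hpq hside) (exp_pos _).le

lemma integral_rpowGap_nonpos (hconc : ConcaveOn ℝ (Ici 0) γ)
    (hmono : MonotoneOn γ (Ici 0)) (hγ0 : 0 ≤ γ 0) (hγ : ∀ r ∈ Ioi (0:ℝ), 0 < γ r)
    (hc : 0 < c) (hp : p ≠ 0) (hq : q ≠ 0) (hpq : p ≤ q)
    (hintp : IntegrableOn (rpowGap γ c p) (Ioi 0)) (hintq : IntegrableOn (rpowGap γ c q) (Ioi 0))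
    (hzero : ∫ r in Ioi (0:ℝ), rpowGap γ c p r = 0) :
    ∫ r in Ioi (0:ℝ), rpowGap γ c q r ≤ 0 := by
  obtain ⟨W, hW⟩ := exists_ae_rpow_mul_rpowGap_le (q := q) hconc hmono hγ0 hγ hc hpq hintp hzero
  have hle : rpowGap γ c q ≤ᵐ[volume.restrict (Ioi 0)] fun r => W * rpowGap γ c p r := by
    filter_upwards [hW, ae_restrict_mem measurableSet_Ioi] with r hWr hr
    exact (rpowGap_le_rpow_mul_rpowGap (hγ r hr) hc hr hp hq hpq).trans hWr
  calc ∫ r in Ioi (0:ℝ), rpowGap γ c q r ≤ ∫ r in Ioi (0:ℝ), W * rpowGap γ c p r :=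
        integral_mono_ae hintq (hintp.const_mul W) hle
    _ = 0 := by rw [integral_const_mul, hzero, mul_zero]

end rpowGap

theorem berwald_one_dim_monotone (γ : ℝ → ℝ)
    (hnn : ∀ r ∈ Ici (0:ℝ), 0 ≤ γ r)
    (hmono : MonotoneOn γ (Ici 0))
    (hconc : ConcaveOn ℝ (Ici 0) γ)
    (hne : ∃ r ∈ Ici (0:ℝ), γ r ≠ 0)
    (hint : ∀ p : ℝ, -1 < p → IntegrableOn (fun r => γ r ^ p * Real.exp (-r)) (Ioi 0)) :
    ∀ p q : ℝ, p ∈ Ioo (-1:ℝ) 0 ∪ Ioi 0 → q ∈ Ioo (-1:ℝ) 0 ∪ Ioi 0 → p ≤ q →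
      ((1 / Real.Gamma (1 + q)) * ∫ r in Ioi (0:ℝ), γ r ^ q * Real.exp (-r)) ^ (1/q) ≤
      ((1 / Real.Gamma (1 + p)) * ∫ r in Ioi (0:ℝ), γ r ^ p * Real.exp (-r)) ^ (1/p) := by
  obtain ⟨t₀, ht₀, hγt₀⟩ := hne
  have hγ0 : 0 ≤ γ 0 := hnn 0 self_mem_Ici
  have hγ : ∀ r ∈ Ioi (0:ℝ), 0 < γ r := fun r hr =>
    hconc.pos_of_monotoneOn hmono hγ0 ht₀ ((hnn t₀ ht₀).lt_of_ne' hγt₀) hr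
  have hdom : ∀ t ∈ Ioo (-1:ℝ) 0 ∪ Ioi 0, -1 < t ∧ t ≠ 0 := by
    rintro t (⟨ht₁, ht₀⟩ | ht₀)
    exacts [⟨ht₁, ht₀.ne⟩, ⟨by linarith [mem_Ioi.1 ht₀], ht₀.ne'⟩]
  intro p q hp hq hpq
  obtain ⟨hp₁, hp₀⟩ := hdom p hp
  obtain ⟨hq₁, hq₀⟩ := hdom q hq
  have hΓp : 0 < Gamma (1 + p) := Gamma_pos_of_pos (by linarith)
  set Ip := ∫ r in Ioi (0:ℝ), γ r ^ p * exp (-r)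
  set c := (1 / Gamma (1 + p) * Ip) ^ (1 / p)
  have hIp : 0 < Ip :=
    setIntegral_Ioi_pos (fun r hr => mul_pos (rpow_pos_of_pos (hγ r hr) p) (exp_pos _)) (hint p hp₁)
  have hc : 0 < c := rpow_pos_of_pos (by positivity) _
  have hcp : c ^ p * Gamma (1 + p) = Ip := by
    simp only [c]; rw [one_div p, rpow_inv_rpow (by positivity) hp₀]; field_simp
  have hgap := integral_rpowGap_nonpos hconc hmono hγ0 hγ hc hp₀ hq₀ hpq
    (integrableOn_rpowGap hc.le hp₁ (hint p hp₁)) (integrableOn_rpowGap hc.le hq₁ (hint q hq₁))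
    (by rw [integral_rpowGap hc.le hp₁ (hint p hp₁), hcp, sub_self, zero_div])
  rw [integral_rpowGap hc.le hq₁ (hint q hq₁)] at hgap
  exact one_div_mul_rpow_one_div_le (setIntegral_nonneg measurableSet_Ioi fun r hr =>
    mul_nonneg (rpow_nonneg (hγ r hr).le q) (exp_pos _).le) (Gamma_pos_of_pos (by linarith)) hc
    hq₀ hgap
end

section
/- Let γ : [0,∞) → [0,∞) be a non-decreasing concave function with γ(r) > 0 for r > 0. Then lim_{p→0⁺} ( (1/Γ(1+p)) ∫₀^∞ γ(r)^p e^{-r} dr )^{1/p} = e^{A} · exp( ∫₀^∞ log γ(r) e^{-r} dr ), where A is the Euler–Mascheroni constant. -/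
/-!
Put `F p = ∫ γ^p e^{-r}`, so that `F 0 = 1` and `Γ(1 + 0) = 1`. If `(M p - 1)/p → c` then
`M p ^ (1/p) → exp c`, so it suffices to find the right derivatives at `0` of `F` and of
`p ↦ Γ(1 + p)`. The second is `Γ'(1) = -A`. For the first, convexity of `p ↦ x^p` gives
`log x ≤ (x^p - 1)/p ≤ (x^q - 1)/q` for `0 < p ≤ q`, so dominated convergence applies to
`(F p - 1)/p = ∫ (γ^p - 1)/p · e^{-r}` and yields `∫ log γ · e^{-r}`.
-/

open Real MeasureTheory Set Filter Topology

lemma rpow_sub_one_div_le_rpow_sub_one_div {x p q : ℝ} (hx : 0 < x) (hp : 0 < p) (hpq : p ≤ q) :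
    (x ^ p - 1) / p ≤ (x ^ q - 1) / q := by
  simpa using (convexOn_rpow_left hx).secant_mono (a := 0) (mem_univ _) (mem_univ _)
    (mem_univ _) hp.ne' (hp.trans_le hpq).ne' hpq

lemma log_le_rpow_sub_one_div {x p : ℝ} (hx : 0 < x) (hp : 0 < p) :
    log x ≤ (x ^ p - 1) / p := by
  rw [le_div_iff₀ hp, mul_comm, ← log_rpow hx]
  exact log_le_sub_one_of_pos (rpow_pos_of_pos hx p)

lemma abs_rpow_sub_one_div_le {x p q : ℝ} (hx : 0 < x) (hp : 0 < p) (hpq : p ≤ q) :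
    |(x ^ p - 1) / p| ≤ |log x| + (x ^ q + 1) / q := by
  have hq : 0 < q := hp.trans_le hpq
  have hlow := log_le_rpow_sub_one_div hx hp
  have hup := rpow_sub_one_div_le_rpow_sub_one_div hx hp hpq
  have hup_le : (x ^ q - 1) / q ≤ (x ^ q + 1) / q := by gcongr; linarith
  have hbound_nonneg : 0 ≤ (x ^ q + 1) / q := by positivity
  rw [abs_le]
  constructor <;> linarith [neg_abs_le (log x), le_abs_self (log x)]

lemma tendsto_rpow_sub_one_div {x : ℝ} (hx : 0 < x) :
    Tendsto (fun p => (x ^ p - 1) / p) (𝓝[>] 0) (𝓝 (log x)) := by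
  simpa [div_eq_inv_mul] using
    (hasStrictDerivAt_const_rpow hx 0).hasDerivAt.tendsto_slope_zero_right

theorem tendsto_integral_rpow_sub_one_div {α : Type*} [MeasurableSpace α] {μ : Measure α}
    {f w : α → ℝ} {q : ℝ} (hq : 0 < q) (hf : ∀ᵐ x ∂μ, 0 < f x) (hw : ∀ᵐ x ∂μ, 0 ≤ w x)
    (hw_int : Integrable w μ) (hfw : ∀ p ∈ Ioc 0 q, Integrable (fun x => f x ^ p * w x) μ)
    (hlog : Integrable (fun x => |log (f x)| * w x) μ) :
    Tendsto (fun p => (∫ x, f x ^ p * w x ∂μ - ∫ x, w x ∂μ) / p) (𝓝[>] 0)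
      (𝓝 (∫ x, log (f x) * w x ∂μ)) := by
  have hsmall : ∀ᶠ p in 𝓝[>] (0 : ℝ), p ∈ Ioc 0 q := Ioc_mem_nhdsGT hq
  have hquot (p : ℝ) : (fun x => (f x ^ p - 1) / p * w x)
      = fun x => (f x ^ p * w x - w x) / p := by
    funext x
    ring
  have hlim : Tendsto (fun p => ∫ x, (f x ^ p - 1) / p * w x ∂μ) (𝓝[>] 0)
      (𝓝 (∫ x, log (f x) * w x ∂μ)) := by
    refine tendsto_integral_filter_of_dominated_convergence
      (fun x => (|log (f x)| + (f x ^ q + 1) / q) * w x) ?_ ?_ ?_ ?_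
    · filter_upwards [hsmall] with p hp
      rw [hquot p]
      exact (((hfw p hp).sub hw_int).div_const p).aestronglyMeasurable
    · filter_upwards [hsmall] with p hp
      filter_upwards [hf, hw] with x hfx hwx
      rw [norm_mul, norm_eq_abs, norm_eq_abs, abs_of_nonneg hwx]
      exact mul_le_mul_of_nonneg_right (abs_rpow_sub_one_div_le hfx hp.1 hp.2) hwx
    · refine (hlog.add (((hfw q ⟨hq, le_rfl⟩).add hw_int).div_const q)).congr ?_
      filter_upwards with x
      simp only [Pi.add_apply]
      ring
    · filter_upwards [hf] with x hfx
      exact (tendsto_rpow_sub_one_div hfx).mul_const _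
  refine hlim.congr' ?_
  filter_upwards [hsmall] with p hp
  rw [hquot p, integral_div, integral_sub (hfw p hp) hw_int]

section RightDerivativeAtZero

variable {M : ℝ → ℝ} {c : ℝ}

lemma tendsto_one_of_tendsto_sub_one_div
    (h : Tendsto (fun p => (M p - 1) / p) (𝓝[>] 0) (𝓝 c)) : Tendsto M (𝓝[>] 0) (𝓝 1) := by
  have hid : Tendsto (fun p : ℝ => p) (𝓝[>] 0) (𝓝 0) := tendsto_nhdsWithin_of_tendsto_nhds tendsto_id
  have := (tendsto_const_nhds (x := (1 : ℝ))).add (hid.mul h)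
  rw [zero_mul, add_zero] at this
  refine this.congr' ?_
  filter_upwards [self_mem_nhdsWithin] with p (hp : 0 < p)
  field_simp
  ring

lemma tendsto_log_div_of_tendsto_sub_one_div
    (h : Tendsto (fun p => (M p - 1) / p) (𝓝[>] 0) (𝓝 c)) :
    Tendsto (fun p => log (M p) / p) (𝓝[>] 0) (𝓝 c) := by
  have hM := tendsto_one_of_tendsto_sub_one_div h
  have hlow : Tendsto (fun p => (M p - 1) / p / M p) (𝓝[>] 0) (𝓝 c) := by
    simpa only [div_one, Pi.div_def] using h.div hM one_ne_zero
  refine tendsto_of_tendsto_of_tendsto_of_le_of_le' hlow h ?_ ?_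
  · filter_upwards [self_mem_nhdsWithin, hM.eventually (lt_mem_nhds one_pos)] with p (hp : 0 < p) hMp
    have : (M p - 1) / M p = 1 - (M p)⁻¹ := by field_simp
    rw [div_right_comm, this]
    exact div_le_div_of_nonneg_right (one_sub_inv_le_log_of_pos hMp) hp.le
  · filter_upwards [self_mem_nhdsWithin, hM.eventually (lt_mem_nhds one_pos)] with p (hp : 0 < p) hMp
    exact div_le_div_of_nonneg_right (log_le_sub_one_of_pos hMp) hp.le

lemma tendsto_rpow_one_div_of_tendsto_sub_one_div
    (h : Tendsto (fun p => (M p - 1) / p) (𝓝[>] 0) (𝓝 c)) :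
    Tendsto (fun p => M p ^ (1 / p)) (𝓝[>] 0) (𝓝 (exp c)) := by
  refine ((continuous_exp.tendsto c).comp (tendsto_log_div_of_tendsto_sub_one_div h)).congr' ?_
  filter_upwards [(tendsto_one_of_tendsto_sub_one_div h).eventually (lt_mem_nhds one_pos)]
    with p hMp
  rw [rpow_def_of_pos hMp, Function.comp_apply, mul_one_div]

lemma tendsto_div_sub_one_div {F G : ℝ → ℝ} {a b : ℝ}
    (hF : Tendsto (fun p => (F p - 1) / p) (𝓝[>] 0) (𝓝 a))
    (hG : Tendsto (fun p => (G p - 1) / p) (𝓝[>] 0) (𝓝 b)) :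
    Tendsto (fun p => (F p / G p - 1) / p) (𝓝[>] 0) (𝓝 (a - b)) := by
  have hG1 := tendsto_one_of_tendsto_sub_one_div hG
  have : Tendsto (fun p => ((F p - 1) / p - (G p - 1) / p) / G p) (𝓝[>] 0) (𝓝 (a - b)) := by
    simpa only [div_one, Pi.div_def] using (hF.sub hG).div hG1 one_ne_zero
  refine this.congr' ?_
  filter_upwards [self_mem_nhdsWithin, hG1.eventually (eventually_ne_nhds one_ne_zero)]
    with p (hp : 0 < p) hGp
  field_simp
  ring

end RightDerivativeAtZero

lemma tendsto_Gamma_one_add_sub_one_div :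
    Tendsto (fun p => (Gamma (1 + p) - 1) / p) (𝓝[>] 0) (𝓝 (-eulerMascheroniConstant)) := by
  simpa [Gamma_one, div_eq_inv_mul] using hasDerivAt_Gamma_one.tendsto_slope_zero_right

theorem berwald_one_dim_limit_at_zero_general (γ : ℝ → ℝ)
    (hpos : ∀ r : ℝ, 0 < r → 0 < γ r)
    (hint : ∀ p : ℝ, -1 < p → IntegrableOn (fun r => γ r ^ p * Real.exp (-r)) (Ioi 0))
    (hlog : IntegrableOn (fun r => |Real.log (γ r)| * Real.exp (-r)) (Ioi 0)) :
    Tendsto (fun p : ℝ =>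
        ((1 / Real.Gamma (1 + p)) * ∫ r in Ioi (0:ℝ), γ r ^ p * Real.exp (-r)) ^ (1/p))
      (nhdsWithin 0 (Ioi 0))
      (nhds (Real.exp Real.eulerMascheroniConstant *
        Real.exp (∫ r in Ioi (0:ℝ), Real.log (γ r) * Real.exp (-r)))) := by
  have hF : Tendsto (fun p => ((∫ r in Ioi (0:ℝ), γ r ^ p * exp (-r)) - 1) / p) (𝓝[>] 0)
      (𝓝 (∫ r in Ioi (0:ℝ), log (γ r) * exp (-r))) := by
    have := tendsto_integral_rpow_sub_one_div one_pos
      ((ae_restrict_iff' measurableSet_Ioi).2 (Eventually.of_forall hpos))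
      (Eventually.of_forall fun r => (exp_pos (-r)).le) (integrableOn_exp_neg_Ioi 0)
      (fun p hp => hint p (by linarith [hp.1])) hlog
    rwa [integral_exp_neg_Ioi_zero] at this
  have := tendsto_rpow_one_div_of_tendsto_sub_one_div
    (tendsto_div_sub_one_div hF tendsto_Gamma_one_add_sub_one_div)
  rw [sub_neg_eq_add, exp_add, mul_comm] at this
  simpa only [one_div_mul_eq_div] using this

theorem berwald_one_dim_limit_at_zero (γ : ℝ → ℝ)
    (hnn : ∀ r ∈ Ici (0:ℝ), 0 ≤ γ r)
    (hpos : ∀ r : ℝ, 0 < r → 0 < γ r)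
    (hmono : MonotoneOn γ (Ici 0))
    (hconc : ConcaveOn ℝ (Ici 0) γ)
    (hint : ∀ p : ℝ, -1 < p → IntegrableOn (fun r => γ r ^ p * Real.exp (-r)) (Ioi 0))
    (hlog : IntegrableOn (fun r => |Real.log (γ r)| * Real.exp (-r)) (Ioi 0)) :
    Tendsto (fun p : ℝ =>
        ((1 / Real.Gamma (1 + p)) * ∫ r in Ioi (0:ℝ), γ r ^ p * Real.exp (-r)) ^ (1/p))
      (nhdsWithin 0 (Ioi 0))
      (nhds (Real.exp Real.eulerMascheroniConstant *
        Real.exp (∫ r in Ioi (0:ℝ), Real.log (γ r) * Real.exp (-r)))) :=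
  berwald_one_dim_limit_at_zero_general γ hpos hint hlog
end

section
/- Let g : ℝⁿ → [0,∞) be integrable and log-concave with g(0) > 0. Then the Lebesgue measure of Ball's body K̃_n(g) = { x : ∫₀^∞ g(rx) r^{n-1} dr ≥ g(0)/n } satisfies |K̃_n(g)| = (1/g(0)) ∫_{ℝⁿ} g(x) dx. -/
/-!
In polar coordinates `x = r • u` the radial integral `F(x) = ∫₀^∞ g(r x) r^(n-1) dr` is
homogeneous of degree `-n`, so the ray through a unit vector `u` meets `K̃_n(g)` in the segment
`0 < r ≤ ρ(u)` with `ρ(u)^n = n F(u) / g(0)`. Its weight `∫₀^ρ r^(n-1) dr = F(u) / g(0)`,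
integrated over the sphere, is `(1 / g(0)) ∫ g` by polar coordinates once more.
Only the a.e. class of `g` is given; changing `g` on a null set changes `F` only on a null set,
because dilations preserve null sets.
-/

open Real MeasureTheory Set Metric
open scoped ENNReal

section Radial

variable {E : Type*} [NormedAddCommGroup E] [NormedSpace ℝ E]

noncomputable def radialIntegral (g : E → ℝ) (k : ℕ) (x : E) : ℝ :=
  ∫ r in Ioi (0 : ℝ), g (r • x) * r ^ k

theorem radialIntegral_smul (g : E → ℝ) (k : ℕ) (x : E) {t : ℝ} (ht : 0 < t) :
    radialIntegral g k (t • x) = (t ^ (k + 1))⁻¹ * radialIntegral g k x := by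
  have hk : t ^ k ≠ 0 := pow_ne_zero k ht.ne'
  calc ∫ r in Ioi (0 : ℝ), g (r • t • x) * r ^ k
      = ∫ r in Ioi (0 : ℝ), (t ^ k)⁻¹ * (g ((t * r) • x) * (t * r) ^ k) := by
        congr 1 with r
        rw [smul_comm, smul_smul, mul_pow]
        field_simp
    _ = (t ^ k)⁻¹ * (t⁻¹ * ∫ r in Ioi (0 : ℝ), g (r • x) * r ^ k) := by
        rw [integral_const_mul, integral_comp_mul_left_Ioi (fun r ↦ g (r • x) * r ^ k) 0 ht,
          mul_zero, smul_eq_mul]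
    _ = (t ^ (k + 1))⁻¹ * ∫ r in Ioi (0 : ℝ), g (r • x) * r ^ k := by
        rw [pow_succ, mul_inv, mul_assoc]

theorem radialIntegral_nonneg {g : E → ℝ} (hg_nn : 0 ≤ g) (k : ℕ) (x : E) :
    0 ≤ radialIntegral g k x :=
  setIntegral_nonneg measurableSet_Ioi fun _ hr ↦
    mul_nonneg (hg_nn _) (pow_nonneg (le_of_lt hr) k)

theorem radialIntegral_eq_setIntegral_rpow {n : ℕ} (hn : 0 < n) (g : E → ℝ) (x : E) :
    radialIntegral g (n - 1) x = ∫ r in Ioi (0 : ℝ), g (r • x) * r ^ ((n : ℝ) - 1) := by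
  simp only [radialIntegral, ← Nat.cast_pred hn, rpow_natCast]

variable [MeasurableSpace E] [BorelSpace E]

theorem measurable_radialIntegral {g : E → ℝ} (hg : Measurable g) (k : ℕ) :
    Measurable (radialIntegral g k) := by
  have : StronglyMeasurable fun p : E × ℝ ↦ g (p.2 • p.1) * p.2 ^ k :=
    ((hg.comp (by fun_prop)).mul (by fun_prop)).stronglyMeasurable
  exact this.integral_prod_right'.measurable

theorem radialIntegral_eq_toReal_lintegral {g : E → ℝ} (hg : Measurable g) (hg_nn : 0 ≤ g)
    (k : ℕ) (x : E) :
    radialIntegral g k x =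
      (∫⁻ r in Ioi (0 : ℝ), ENNReal.ofReal (r ^ k) * .ofReal (g (r • x))).toReal := by
  rw [radialIntegral, integral_eq_lintegral_of_nonneg_ae]
  · refine congrArg _ (setLIntegral_congr_fun measurableSet_Ioi fun r hr ↦ ?_)
    rw [mul_comm, ENNReal.ofReal_mul (pow_nonneg (le_of_lt hr) k)]
  · exact (ae_restrict_iff' measurableSet_Ioi).2 <| .of_forall fun r hr ↦
      mul_nonneg (hg_nn _) (pow_nonneg (le_of_lt hr) k)
  · exact ((hg.comp (by fun_prop)).mul (by fun_prop)).aestronglyMeasurable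

variable [FiniteDimensional ℝ E] (μ : Measure E) [μ.IsAddHaarMeasure]

theorem ae_ae_smul_notMem_of_measure_zero {N : Set E} (hN : MeasurableSet N) (hN0 : μ N = 0) :
    ∀ᵐ x ∂μ, ∀ᵐ r ∂volume.restrict (Ioi (0 : ℝ)), r • x ∉ N := by
  have hpairs : Measurable fun p : E × ℝ ↦ p.2 • p.1 := by fun_prop
  rw [Measure.ae_ae_comm (hN.preimage hpairs).compl]
  refine (ae_restrict_iff' measurableSet_Ioi).2 <| .of_forall fun r hr ↦ ?_
  have hpre : μ ((r • ·) ⁻¹' N) = 0 := by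
    rw [Measure.addHaar_preimage_smul μ (ne_of_gt hr), hN0, mul_zero]
  exact measure_mono_null (fun x hx ↦ not_not.1 hx) hpre

theorem radialIntegral_ae_congr {g g' : E → ℝ} (h : g =ᵐ[μ] g') (k : ℕ) :
    radialIntegral g k =ᵐ[μ] radialIntegral g' k := by
  obtain ⟨N, hsub, hN, hN0⟩ := exists_measurable_superset_of_null (ae_iff.1 h)
  filter_upwards [ae_ae_smul_notMem_of_measure_zero μ hN hN0] with x hx
  refine integral_congr_ae ?_
  filter_upwards [hx] with r hr
  rw [show g (r • x) = g' (r • x) from not_not.1 fun hne ↦ hr (hsub hne)]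

end Radial

namespace MeasureTheory.Measure

theorem lintegral_volumeIoiPow (k : ℕ) {f : ℝ → ℝ≥0∞} (hf : Measurable f) :
    ∫⁻ r, f r ∂volumeIoiPow k = ∫⁻ r in Ioi (0 : ℝ), ENNReal.ofReal (r ^ k) * f r := by
  rw [volumeIoiPow, lintegral_withDensity_eq_lintegral_mul _ (by fun_prop) (by fun_prop)]
  exact lintegral_subtype_comap measurableSet_Ioi (fun r ↦ ENNReal.ofReal (r ^ k) * f r)

theorem volumeIoiPow_setOf_pow_le {n : ℕ} (hn : 0 < n) {a : ℝ} (ha : 0 ≤ a) :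
    volumeIoiPow (n - 1) {r | r.1 ^ n ≤ a} = ENNReal.ofReal (a / n) := by
  set R := a ^ (n⁻¹ : ℝ)
  have hR : 0 ≤ R := rpow_nonneg ha _
  have hRn : R ^ n = a := rpow_inv_natCast_pow ha hn.ne'
  have himage : Subtype.val '' {r : Ioi (0 : ℝ) | r.1 ^ n ≤ a} = Ioc 0 R := by
    ext x
    simp only [mem_image, Subtype.exists, mem_Ioi, exists_and_right,
      exists_eq_right, mem_Ioc]
    constructor
    · rintro ⟨hx, hxa⟩
      exact ⟨hx, (pow_le_pow_iff_left₀ hx.le hR hn.ne').1 (hRn ▸ hxa)⟩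
    · rintro ⟨hx, hxR⟩
      exact ⟨hx, hRn ▸ pow_le_pow_left₀ hx.le hxR n⟩
  rw [volumeIoiPow, withDensity_apply _ (measurableSet_le (by fun_prop) measurable_const),
    setLIntegral_subtype measurableSet_Ioi _ fun r : ℝ ↦ ENNReal.ofReal (r ^ (n - 1)), himage,
    ← ofReal_integral_eq_lintegral_ofReal (intervalIntegral.intervalIntegrable_pow _).1,
    ← intervalIntegral.integral_of_le hR,
    integral_pow, Nat.sub_add_cancel hn, Nat.cast_pred hn, sub_add_cancel, hRn,
    zero_pow hn.ne', sub_zero]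
  filter_upwards [ae_restrict_mem measurableSet_Ioc] with r hr
  exact pow_nonneg hr.1.le _

end MeasureTheory.Measure

section Polar

variable {E : Type*} [NormedAddCommGroup E] [NormedSpace ℝ E] [FiniteDimensional ℝ E]
  [MeasurableSpace E] [BorelSpace E] [Nontrivial E] (μ : Measure E) [μ.IsAddHaarMeasure]

theorem lintegral_eq_lintegral_toSphere {f : E → ℝ≥0∞} (hf : Measurable f) :
    ∫⁻ x, f x ∂μ = ∫⁻ u, ∫⁻ r, f (r.1 • u.1)
      ∂Measure.volumeIoiPow (Module.finrank ℝ E - 1) ∂μ.toSphere := by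
  have hpolar : Measurable fun p : sphere (0 : E) 1 × Ioi (0 : ℝ) ↦ f (p.2.1 • p.1.1) :=
    hf.comp (by fun_prop)
  calc ∫⁻ x, f x ∂μ
      = ∫⁻ x : ({0}ᶜ : Set E), f x ∂μ.comap Subtype.val := by
        rw [lintegral_subtype_comap (measurableSet_singleton 0).compl, restrict_compl_singleton]
    _ = ∫⁻ x : ({0}ᶜ : Set E), f ((homeomorphUnitSphereProd E x).2.1 •
          (homeomorphUnitSphereProd E x).1.1) ∂μ.comap Subtype.val := by
        simp only [← homeomorphUnitSphereProd_symm_apply_coe, Homeomorph.symm_apply_apply]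
    _ = ∫⁻ p, f (p.2.1 • p.1.1)
          ∂μ.toSphere.prod (Measure.volumeIoiPow (Module.finrank ℝ E - 1)) :=
        (μ.measurePreserving_homeomorphUnitSphereProd).lintegral_comp hpolar
    _ = _ := lintegral_prod _ hpolar.aemeasurable

theorem measure_eq_lintegral_toSphere {s : Set E} (hs : MeasurableSet s) :
    μ s = ∫⁻ u, Measure.volumeIoiPow (Module.finrank ℝ E - 1) {r | r.1 • u.1 ∈ s}
      ∂μ.toSphere := by
  rw [← lintegral_indicator_one hs, lintegral_eq_lintegral_toSphere μ (by fun_prop)]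
  refine lintegral_congr fun u ↦ ?_
  exact lintegral_indicator_one (hs.preimage (measurable_subtype_coe.smul_const _))

end Polar

section BallBody

variable {E : Type*} [NormedAddCommGroup E] [NormedSpace ℝ E]

theorem volumeIoiPow_setOf_le_radialIntegral_smul {n : ℕ} (hn : 0 < n) {g : E → ℝ}
    (hg_nn : 0 ≤ g) {c : ℝ} (hc : 0 < c) (x : E) :
    Measure.volumeIoiPow (n - 1) {r | c ≤ radialIntegral g (n - 1) (r.1 • x)} =
      ENNReal.ofReal (radialIntegral g (n - 1) x / (n * c)) := by
  have hfiber : {r : Ioi (0 : ℝ) | c ≤ radialIntegral g (n - 1) (r.1 • x)} =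
      {r | r.1 ^ n ≤ radialIntegral g (n - 1) x / c} := by
    ext r
    have hr : 0 < r.1 ^ n := pow_pos r.2 n
    rw [mem_ofPred_eq, mem_ofPred_eq, radialIntegral_smul g _ x r.2, Nat.sub_add_cancel hn,
      le_inv_mul_iff₀ hr, le_div_iff₀ hc]
  rw [hfiber, Measure.volumeIoiPow_setOf_pow_le hn (div_nonneg (radialIntegral_nonneg hg_nn _ x)
    hc.le), div_div, mul_comm c]

variable [FiniteDimensional ℝ E] [MeasurableSpace E] [BorelSpace E] [Nontrivial E]
  (μ : Measure E) [μ.IsAddHaarMeasure]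

theorem addHaar_setOf_le_radialIntegral_of_measurable {g : E → ℝ} (hg : Measurable g)
    (hg_nn : 0 ≤ g) (hg_int : Integrable g μ) {c : ℝ} (hc : 0 < c) :
    μ {x | c ≤ radialIntegral g (Module.finrank ℝ E - 1) x} =
      ENNReal.ofReal ((∫ x, g x ∂μ) / (Module.finrank ℝ E * c)) := by
  set d := Module.finrank ℝ E
  set L : sphere (0 : E) 1 → ℝ≥0∞ :=
    fun u ↦ ∫⁻ r, ENNReal.ofReal (g (r.1 • u.1)) ∂Measure.volumeIoiPow (d - 1)
  have hL : ∀ u, radialIntegral g (d - 1) u.1 = (L u).toReal := fun u ↦ by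
    rw [radialIntegral_eq_toReal_lintegral hg hg_nn,
      ← Measure.lintegral_volumeIoiPow (f := fun r ↦ ENNReal.ofReal (g (r • u.1))) _
        (hg.comp (by fun_prop)).ennreal_ofReal]
  have htotal : ∫⁻ u, L u ∂μ.toSphere = ENNReal.ofReal (∫ x, g x ∂μ) := by
    rw [← lintegral_eq_lintegral_toSphere μ hg.ennreal_ofReal,
      ofReal_integral_eq_lintegral_ofReal hg_int (.of_forall hg_nn)]
  have hL_fin : ∀ᵐ u ∂μ.toSphere, L u ≠ ∞ := by
    refine ae_lt_top' ?_ (htotal ▸ ENNReal.ofReal_ne_top) |>.mono fun u hu ↦ hu.ne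
    exact (Measurable.lintegral_prod_right (hg.comp (by fun_prop)).ennreal_ofReal).aemeasurable
  have hd : 0 < d := Module.finrank_pos
  have hdc : 0 < (d : ℝ) * c := mul_pos (Nat.cast_pos.2 hd) hc
  calc μ {x | c ≤ radialIntegral g (d - 1) x}
      = ∫⁻ u, ENNReal.ofReal (radialIntegral g (d - 1) u / (d * c)) ∂μ.toSphere := by
        rw [measure_eq_lintegral_toSphere μ
          (measurableSet_le measurable_const (measurable_radialIntegral hg _))]
        exact lintegral_congr fun u ↦ volumeIoiPow_setOf_le_radialIntegral_smul hd hg_nn hc u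
    _ = ∫⁻ u, L u / ENNReal.ofReal (d * c) ∂μ.toSphere := by
        refine lintegral_congr_ae (hL_fin.mono fun u hu ↦ ?_)
        dsimp only
        rw [hL, ENNReal.ofReal_div_of_pos hdc, ENNReal.ofReal_toReal hu]
    _ = (∫⁻ u, L u ∂μ.toSphere) / ENNReal.ofReal (d * c) := by
        simp_rw [div_eq_mul_inv]
        exact lintegral_mul_const' _ _ (ENNReal.inv_ne_top.2 (ENNReal.ofReal_pos.2 hdc).ne')
    _ = ENNReal.ofReal ((∫ x, g x ∂μ) / (d * c)) := by
        rw [htotal, ENNReal.ofReal_div_of_pos hdc]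

theorem addHaar_setOf_le_radialIntegral {g : E → ℝ} (hg_nn : 0 ≤ᵐ[μ] g)
    (hg_int : Integrable g μ) {c : ℝ} (hc : 0 < c) :
    μ {x | c ≤ radialIntegral g (Module.finrank ℝ E - 1) x} =
      ENNReal.ofReal ((∫ x, g x ∂μ) / (Module.finrank ℝ E * c)) := by
  obtain ⟨g', hg'_meas, hg'_nn, hgg'⟩ := hg_int.aemeasurable.exists_measurable_nonneg hg_nn
  have hsets : {x | c ≤ radialIntegral g (Module.finrank ℝ E - 1) x} =ᵐ[μ]
      {x | c ≤ radialIntegral g' (Module.finrank ℝ E - 1) x} :=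
    (radialIntegral_ae_congr μ hgg' _).fun_comp (c ≤ ·)
  rw [measure_congr hsets, integral_congr_ae hgg',
    addHaar_setOf_le_radialIntegral_of_measurable μ hg'_meas hg'_nn (hg_int.congr hgg') hc]

end BallBody

theorem ball_body_volume_general (n : ℕ) (hn : 0 < n)
    (g : EuclideanSpace ℝ (Fin n) → ℝ)
    (hg_nn : ∀ x, 0 ≤ g x)
    (hg_int : Integrable g)
    (hg0 : 0 < g 0)
    (Kn : Set (EuclideanSpace ℝ (Fin n)))
    (hKn : Kn = {x | g 0 / n ≤ ∫ r in Ioi (0:ℝ), g (r • x) * r ^ ((n : ℝ) - 1)}) :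
    (volume Kn).toReal = (1 / g 0) * ∫ x, g x := by
  have : Nontrivial (EuclideanSpace ℝ (Fin n)) :=
    Module.nontrivial_of_finrank_pos (R := ℝ) (by rwa [finrank_euclideanSpace_fin])
  have hKn' : Kn = {x | g 0 / n ≤
      radialIntegral g (Module.finrank ℝ (EuclideanSpace ℝ (Fin n)) - 1) x} := by
    simp only [hKn, finrank_euclideanSpace_fin, radialIntegral_eq_setIntegral_rpow hn]
  have hn' : (0 : ℝ) < n := Nat.cast_pos.2 hn
  rw [hKn', addHaar_setOf_le_radialIntegral volume (.of_forall hg_nn) hg_int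
    (div_pos hg0 hn'), finrank_euclideanSpace_fin, ENNReal.toReal_ofReal
    (div_nonneg (integral_nonneg hg_nn) (by positivity))]
  field_simp

theorem ball_body_volume (n : ℕ) (hn : 0 < n)
    (g : EuclideanSpace ℝ (Fin n) → ℝ)
    (hg_nn : ∀ x, 0 ≤ g x)
    (hg_int : Integrable g)
    (hg_lc : ∀ x y : EuclideanSpace ℝ (Fin n), ∀ l : ℝ, 0 < l → l < 1 →
      g x ^ l * g y ^ (1 - l) ≤ g (l • x + (1 - l) • y))
    (hg0 : 0 < g 0)
    (Kn : Set (EuclideanSpace ℝ (Fin n)))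
    (hKn : Kn = {x | g 0 / n ≤ ∫ r in Ioi (0:ℝ), g (r • x) * r ^ ((n : ℝ) - 1)}) :
    (volume Kn).toReal = (1 / g 0) * ∫ x, g x :=
  ball_body_volume_general n hn g hg_nn hg_int hg0 Kn hKn
end

section
/- Let g : ℝⁿ → [0,∞) be integrable and log-concave with ‖g‖_∞ = g(0) > 0. Then for 0 < p ≤ q, (Γ(1+p)^{1/p} / Γ(1+q)^{1/q}) K̃_q(g) ⊆ K̃_p(g) ⊆ K̃_q(g), where K̃_p(g) is Ball's body with radial function ρ_{K̃_p(g)}(u)^p = (1/g(0)) ∫₀^∞ p r^{p-1} g(ru) dr. -/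
open Real MeasureTheory Set Pointwise

open Topology

/-!
Along a ray, `g` restricts to a log-concave `h : [0, ∞) → [0, h 0]`, and `x ∈ K̃_s(g)` says that
the moment `∫₀^∞ h(r) r^(s-1) dr` is at least `h 0 / s`, the moment of `h 0 · 1_(0,1]`.
Since `h - h 0 · 1_(0,1]` is `≤ 0` on `(0,1]` and `≥ 0` beyond, the excess of the `s`-th moment
over `h 0 / s` increases with `s`; this gives `K̃_p ⊆ K̃_q`.
Conversely, log-concavity lets `h - h 0 · e^(-b r)` change sign only once, from `+` to `-`, and
such a single crossing transfers nonnegativity of the `q`-th moment to the `p`-th one for `p ≤ q`.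
With `b = Γ(1+q)^(1/q)` the exponential has `q`-th moment `h 0 / q` and `p`-th moment
`Γ(1+p) / Γ(1+q)^(p/q) · h 0 / p`; the dilation `r ↦ c r` divides the `p`-th moment by `c^p`.
-/

/-- `s / g 0 · radialMoment (fun r => g (r • u)) s` is `ρ_{K̃_s(g)}(u) ^ s`. -/
noncomputable def radialMoment (h : ℝ → ℝ) (s : ℝ) : ℝ :=
  ∫ r in Ioi (0 : ℝ), h r * r ^ (s - 1)

section radialMoment

variable {f h : ℝ → ℝ} {c p q s : ℝ}

theorem radialMoment_sub
    (hf : IntegrableOn (fun r => f r * r ^ (s - 1)) (Ioi 0))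
    (hh : IntegrableOn (fun r => h r * r ^ (s - 1)) (Ioi 0)) :
    radialMoment (f - h) s = radialMoment f s - radialMoment h s := by
  simp only [radialMoment, Pi.sub_apply, sub_mul]
  exact integral_sub hf hh

theorem radialMoment_comp_mul_left (h : ℝ → ℝ) (s : ℝ) (hc : 0 < c) :
    radialMoment (fun r => h (c * r)) s = c ^ (-s) * radialMoment h s := by
  have hscale : ∀ r ∈ Ioi (0 : ℝ),
      h (c * r) * r ^ (s - 1) = c ^ (1 - s) * (h (c * r) * (c * r) ^ (s - 1)) := by
    intro r hr
    rw [mul_rpow hc.le (le_of_lt hr), mul_left_comm, ← mul_assoc (c ^ (1 - s)),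
      ← rpow_add hc, show 1 - s + (s - 1) = 0 by ring, rpow_zero, one_mul]
  rw [radialMoment, setIntegral_congr_fun measurableSet_Ioi hscale, integral_const_mul,
    integral_comp_mul_left_Ioi (fun r => h r * r ^ (s - 1)) 0 hc, mul_zero, smul_eq_mul,
    ← mul_assoc, ← rpow_neg_one, ← rpow_add hc, radialMoment]
  ring_nf

theorem indicator_Ioc_mul_rpow (c s : ℝ) :
    (fun r => (Ioc 0 1).indicator (fun _ => c) r * r ^ (s - 1)) =
      (Ioc 0 1).indicator fun r => c * r ^ (s - 1) := by
  ext r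
  by_cases hr : r ∈ Ioc (0 : ℝ) 1 <;> simp [hr]

theorem integrableOn_indicator_Ioc_mul_rpow (c : ℝ) (hs : 0 < s) :
    IntegrableOn (fun r => (Ioc 0 1).indicator (fun _ => c) r * r ^ (s - 1)) (Ioi 0) := by
  have hint :=
    intervalIntegral.intervalIntegrable_rpow' (by linarith : -1 < s - 1) (a := 0) (b := 1)
  rw [intervalIntegrable_iff_integrableOn_Ioc_of_le zero_le_one] at hint
  rw [indicator_Ioc_mul_rpow]
  exact (IntegrableOn.integrable_indicator (hint.const_mul c) measurableSet_Ioc).integrableOn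

theorem radialMoment_indicator_Ioc (c : ℝ) (hs : 0 < s) :
    radialMoment ((Ioc 0 1).indicator fun _ => c) s = c / s := by
  rw [radialMoment, indicator_Ioc_mul_rpow, setIntegral_indicator measurableSet_Ioc,
    inter_eq_self_of_subset_right Ioc_subset_Ioi_self,
    ← intervalIntegral.integral_of_le zero_le_one, intervalIntegral.integral_const_mul,
    integral_rpow (Or.inl (by linarith)), sub_add_cancel, one_rpow, zero_rpow hs.ne']
  ring

theorem integrableOn_exp_mul_rpow (c : ℝ) {b : ℝ} (hb : 0 < b) (hs : 0 < s) :
    IntegrableOn (fun r => c * exp (-(b * r)) * r ^ (s - 1)) (Ioi 0) := by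
  have hint : IntegrableOn (fun r : ℝ => c * (r ^ (s - 1) * exp (-b * r ^ (1 : ℝ)))) (Ioi 0) :=
    (integrableOn_rpow_mul_exp_neg_mul_rpow (by linarith : -1 < s - 1) one_pos hb).const_mul c
  refine hint.congr_fun (fun r _ => ?_) measurableSet_Ioi
  simp only [rpow_one, neg_mul]
  ring

theorem radialMoment_exp (c : ℝ) {b : ℝ} (hb : 0 < b) (hs : 0 < s) :
    radialMoment (fun r => c * exp (-(b * r))) s = c * Gamma s / b ^ s := by
  have hswap : ∀ r, c * exp (-(b * r)) * r ^ (s - 1) = c * (r ^ (s - 1) * exp (-(b * r))) :=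
    fun r => by ring
  simp only [radialMoment, hswap, integral_const_mul, integral_rpow_mul_exp_neg_mul_Ioi hs hb,
    one_div, inv_rpow hb.le]
  ring

/-- A divergent moment would take the junk value `0`, which is below `c / s`. -/
theorem integrableOn_of_div_le_radialMoment (hc : 0 < c) (hs : 0 < s)
    (hmem : c / s ≤ radialMoment h s) : IntegrableOn (fun r => h r * r ^ (s - 1)) (Ioi 0) := by
  by_contra hint
  rw [radialMoment, integral_undef hint] at hmem
  linarith [div_pos hc hs]

theorem integrableOn_sub_mul_rpow
    (hf : IntegrableOn (fun r => f r * r ^ (s - 1)) (Ioi 0))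
    (hh : IntegrableOn (fun r => h r * r ^ (s - 1)) (Ioi 0)) :
    IntegrableOn (fun r => (f - h) r * r ^ (s - 1)) (Ioi 0) := by
  refine (hf.sub hh).congr_fun (fun r _ => ?_) measurableSet_Ioi
  simp only [Pi.sub_apply, sub_mul]

theorem radialMoment_sub_div_le_of_le (hp : 0 < p) (hpq : p ≤ q)
    (hnonneg : ∀ r, 0 < r → 0 ≤ h r) (hle : ∀ r, 0 < r → h r ≤ c)
    (hip : IntegrableOn (fun r => h r * r ^ (p - 1)) (Ioi 0))
    (hiq : IntegrableOn (fun r => h r * r ^ (q - 1)) (Ioi 0)) :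
    radialMoment h p - c / p ≤ radialMoment h q - c / q := by
  have hq : 0 < q := hp.trans_le hpq
  have hep := integrableOn_indicator_Ioc_mul_rpow c hp
  have heq := integrableOn_indicator_Ioc_mul_rpow c hq
  rw [← radialMoment_indicator_Ioc c hp, ← radialMoment_indicator_Ioc c hq,
    ← radialMoment_sub hip hep, ← radialMoment_sub hiq heq]
  refine setIntegral_mono_on (integrableOn_sub_mul_rpow hip hep) (integrableOn_sub_mul_rpow hiq heq)
    measurableSet_Ioi fun r hr => ?_
  by_cases hr1 : r ≤ 1
  · have hpow : r ^ (q - 1) ≤ r ^ (p - 1) := rpow_le_rpow_of_exponent_ge hr hr1 (by linarith)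
    rw [Pi.sub_apply, indicator_of_mem (show r ∈ Ioc (0 : ℝ) 1 from ⟨hr, hr1⟩)]
    nlinarith [hle r hr]
  · have hpow : r ^ (p - 1) ≤ r ^ (q - 1) :=
      rpow_le_rpow_of_exponent_le (not_le.1 hr1).le (by linarith)
    rw [Pi.sub_apply, indicator_of_notMem (fun h => hr1 h.2), sub_zero]
    exact mul_le_mul_of_nonneg_left hpow (hnonneg r hr)

theorem radialMoment_le_rpow_mul_of_sign_change {r₀ : ℝ} (hr₀ : 0 ≤ r₀) (hpq : p ≤ q)
    (hpos : ∀ r ∈ Ioo 0 r₀, 0 ≤ f r) (hneg : ∀ r, r₀ < r → f r ≤ 0)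
    (hip : IntegrableOn (fun r => f r * r ^ (p - 1)) (Ioi 0))
    (hiq : IntegrableOn (fun r => f r * r ^ (q - 1)) (Ioi 0)) :
    radialMoment f q ≤ r₀ ^ (q - p) * radialMoment f p := by
  rw [radialMoment, radialMoment, ← integral_const_mul]
  refine setIntegral_mono_on hiq (hip.const_mul _) measurableSet_Ioi fun r hr => ?_
  have hsplit : r ^ (q - 1) = r ^ (q - p) * r ^ (p - 1) := by
    rw [← rpow_add hr]; ring_nf
  have hrp : 0 ≤ r ^ (p - 1) := rpow_nonneg (le_of_lt hr) _
  rw [hsplit]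
  rcases lt_trichotomy r r₀ with hlt | rfl | hgt
  · have hpow : r ^ (q - p) ≤ r₀ ^ (q - p) :=
      rpow_le_rpow (le_of_lt hr) hlt.le (by linarith)
    nlinarith [mul_nonneg (hpos r ⟨hr, hlt⟩) hrp]
  · exact le_of_eq (by ring)
  · have hpow : r₀ ^ (q - p) ≤ r ^ (q - p) := rpow_le_rpow hr₀ hgt.le (by linarith)
    nlinarith [mul_nonpos_of_nonpos_of_nonneg (hneg r hgt) hrp]

theorem radialMoment_eq_zero_of_nonpos (hneg : ∀ r, 0 < r → f r ≤ 0)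
    (hiq : IntegrableOn (fun r => f r * r ^ (q - 1)) (Ioi 0)) (hq : 0 ≤ radialMoment f q)
    (p : ℝ) : radialMoment f p = 0 := by
  have hnonpos : ∀ r ∈ Ioi (0 : ℝ), f r * r ^ (q - 1) ≤ 0 :=
    fun r hr => mul_nonpos_of_nonpos_of_nonneg (hneg r hr) (rpow_nonneg (le_of_lt hr) _)
  have hzero : ∫ r in Ioi 0, -(f r * r ^ (q - 1)) = 0 := by
    rw [integral_neg, neg_eq_zero]
    exact le_antisymm (setIntegral_nonpos measurableSet_Ioi hnonpos) hq
  have hae := (setIntegral_eq_zero_iff_of_nonneg_ae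
    (ae_restrict_of_forall_mem measurableSet_Ioi fun r hr => neg_nonneg.2 (hnonpos r hr))
    hiq.neg).1 hzero
  refine integral_eq_zero_of_ae ?_
  filter_upwards [hae, ae_restrict_mem measurableSet_Ioi] with r hr hr0
  have hfr : f r = 0 := by simpa [(rpow_pos_of_pos hr0 _).ne'] using hr
  simp [hfr]

theorem exists_sign_change (hf : ∀ r r', 0 < r → r < r' → 0 ≤ f r' → 0 ≤ f r) :
    (∀ r, 0 < r → 0 ≤ f r) ∨
      ∃ r₀, 0 ≤ r₀ ∧ (∀ r ∈ Ioo 0 r₀, 0 ≤ f r) ∧ ∀ r, r₀ < r → f r ≤ 0 := by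
  set S := {r | 0 < r ∧ 0 ≤ f r}
  by_cases hbdd : BddAbove S
  · refine Or.inr ⟨sSup S, Real.sSup_nonneg fun r hr => hr.1.le, fun r hr => ?_, fun r hr => ?_⟩
    · have hne : S.Nonempty := by
        by_contra hemp
        rw [not_nonempty_iff_eq_empty.1 hemp, Real.sSup_empty] at hr
        linarith [hr.1, hr.2]
      obtain ⟨r', hr', hrr'⟩ := exists_lt_of_lt_csSup hne hr.2
      exact hf r r' hr.1 hrr' hr'.2
    · by_contra hfr
      have hrS : r ∈ S :=
        ⟨(Real.sSup_nonneg fun r hr => hr.1.le).trans_lt hr, (not_le.1 hfr).le⟩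
      exact not_le.2 hr (le_csSup hbdd hrS)
  · refine Or.inl fun r hr => ?_
    obtain ⟨r', hr', hrr'⟩ := not_bddAbove_iff.1 hbdd r
    exact hf r r' hr hrr' hr'.2

theorem radialMoment_nonneg_of_sign_change (hpq : p ≤ q)
    (hf : ∀ r r', 0 < r → r < r' → 0 ≤ f r' → 0 ≤ f r)
    (hip : IntegrableOn (fun r => f r * r ^ (p - 1)) (Ioi 0))
    (hiq : IntegrableOn (fun r => f r * r ^ (q - 1)) (Ioi 0)) (hq : 0 ≤ radialMoment f q) :
    0 ≤ radialMoment f p := by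
  rcases exists_sign_change hf with hnonneg | ⟨r₀, hr₀, hpos, hneg⟩
  · exact setIntegral_nonneg measurableSet_Ioi fun r hr =>
      mul_nonneg (hnonneg r hr) (rpow_nonneg (le_of_lt hr) _)
  rcases hr₀.eq_or_lt with rfl | hr₀
  · exact (radialMoment_eq_zero_of_nonpos hneg hiq hq p).ge
  · exact (mul_nonneg_iff_of_pos_left (rpow_pos_of_pos hr₀ _)).1
      (hq.trans (radialMoment_le_rpow_mul_of_sign_change hr₀.le hpq hpos hneg hip hiq))

end radialMoment

structure IsLogConcaveMaxAtZero {E : Type*} [AddCommGroup E] [Module ℝ E] (g : E → ℝ) :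
    Prop where
  nonneg : ∀ x, 0 ≤ g x
  le_apply_zero : ∀ x, g x ≤ g 0
  logConcave : ∀ x y : E, ∀ l : ℝ, 0 < l → l < 1 →
    g x ^ l * g y ^ (1 - l) ≤ g (l • x + (1 - l) • y)

namespace IsLogConcaveMaxAtZero

theorem comp_smul {E : Type*} [AddCommGroup E] [Module ℝ E] {g : E → ℝ}
    (hg : IsLogConcaveMaxAtZero g) (x : E) : IsLogConcaveMaxAtZero fun r : ℝ => g (r • x) where
  nonneg r := hg.nonneg _
  le_apply_zero r := by simpa only [zero_smul] using hg.le_apply_zero (r • x)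
  logConcave a b l hl hl1 := by
    simpa only [smul_eq_mul, mul_smul, add_smul] using hg.logConcave (a • x) (b • x) l hl hl1

variable {h : ℝ → ℝ} {p q : ℝ}

theorem rpow_mul_le_apply_mul (hh : IsLogConcaveMaxAtZero h) {r t : ℝ} (ht0 : 0 < t)
    (ht1 : t < 1) : h r ^ t * h 0 ^ (1 - t) ≤ h (t * r) := by
  simpa only [smul_eq_mul, mul_zero, add_zero] using hh.logConcave r 0 t ht0 ht1

theorem antitoneOn (hh : IsLogConcaveMaxAtZero h) : AntitoneOn h (Ici 0) := by
  intro a ha b _ hab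
  rcases (mem_Ici.1 ha).eq_or_lt with rfl | ha0
  · exact hh.le_apply_zero b
  rcases hab.eq_or_lt with rfl | hab
  · rfl
  have hb0 : 0 < b := ha0.trans hab
  have ht0 : 0 < a / b := div_pos ha0 hb0
  have ht1 : a / b < 1 := (div_lt_one hb0).2 hab
  calc h b = h b ^ (a / b) * h b ^ (1 - a / b) := by
        rw [← rpow_add' (hh.nonneg b) (by norm_num), add_sub_cancel, rpow_one]
    _ ≤ h b ^ (a / b) * h 0 ^ (1 - a / b) :=
        mul_le_mul_of_nonneg_left (rpow_le_rpow (hh.nonneg b) (hh.le_apply_zero b) (by linarith))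
          (rpow_nonneg (hh.nonneg b) _)
    _ ≤ h (a / b * b) := hh.rpow_mul_le_apply_mul ht0 ht1
    _ = h a := by rw [div_mul_cancel₀ a hb0.ne']

theorem mul_exp_le_of_mul_exp_le (hh : IsLogConcaveMaxAtZero h) {b r r' : ℝ} (hr : 0 < r)
    (hrr' : r < r') (hle : h 0 * exp (-(b * r')) ≤ h r') : h 0 * exp (-(b * r)) ≤ h r := by
  have hr' : 0 < r' := hr.trans hrr'
  have ht0 : 0 < r / r' := div_pos hr hr'
  have ht1 : r / r' < 1 := (div_lt_one hr').2 hrr'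
  have hexp : (h 0 * exp (-(b * r'))) ^ (r / r') * h 0 ^ (1 - r / r') = h 0 * exp (-(b * r)) := by
    rw [mul_rpow (hh.nonneg 0) (exp_pos _).le, ← exp_mul, mul_right_comm,
      ← rpow_add' (hh.nonneg 0) (by norm_num), add_sub_cancel, rpow_one]
    congr 2
    field_simp
  calc h 0 * exp (-(b * r)) = (h 0 * exp (-(b * r'))) ^ (r / r') * h 0 ^ (1 - r / r') := hexp.symm
    _ ≤ h r' ^ (r / r') * h 0 ^ (1 - r / r') :=
        mul_le_mul_of_nonneg_right
          (rpow_le_rpow (mul_nonneg (hh.nonneg 0) (exp_pos _).le) hle ht0.le)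
          (rpow_nonneg (hh.nonneg 0) _)
    _ ≤ h (r / r' * r') := hh.rpow_mul_le_apply_mul ht0 ht1
    _ = h r := by rw [div_mul_cancel₀ r hr'.ne']

theorem exists_exp_bound (hh : IsLogConcaveMaxAtZero h) {R : ℝ} (hR : 0 < R) (hRlt : h R < h 0) :
    ∃ C b : ℝ, 0 < b ∧ ∀ r, 0 ≤ r → h r ≤ C * exp (-(b * r)) := by
  have hev : ∀ᶠ b in 𝓝[>] (0 : ℝ), h R < h 0 * exp (-(b * R)) := by
    have hcont : ContinuousAt (fun b : ℝ => h 0 * exp (-(b * R))) 0 := by fun_prop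
    exact nhdsWithin_le_nhds (hcont.eventually (lt_mem_nhds (by simpa using hRlt)))
  obtain ⟨b, hbR, hb⟩ := (hev.and self_mem_nhdsWithin).exists
  refine ⟨h 0 * exp (b * R), b, hb, fun r hr => ?_⟩
  rw [mul_assoc, ← exp_add]
  rcases le_or_gt r R with hrR | hRr
  · calc h r ≤ h 0 := hh.le_apply_zero r
      _ ≤ h 0 * exp (b * R + -(b * r)) :=
          le_mul_of_one_le_right (hh.nonneg 0) (one_le_exp (by nlinarith [hb]))
  · have hlt : h r < h 0 * exp (-(b * r)) :=
      lt_of_not_ge fun hge => (hh.mul_exp_le_of_mul_exp_le hR hRr hge).not_gt hbR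
    calc h r ≤ h 0 * exp (-(b * r)) := hlt.le
      _ ≤ h 0 * exp (b * R + -(b * r)) := by
          gcongr
          · exact hh.nonneg 0
          · nlinarith [hb]

theorem aestronglyMeasurable_mul_rpow (hh : IsLogConcaveMaxAtZero h) (s : ℝ) :
    AEStronglyMeasurable (fun r => h r * r ^ (s - 1)) (volume.restrict (Ioi 0)) :=
  ((aemeasurable_restrict_of_antitoneOn measurableSet_Ioi
    (hh.antitoneOn.mono Ioi_subset_Ici_self)).mul
    (by fun_prop : Measurable fun r : ℝ => r ^ (s - 1)).aemeasurable).aestronglyMeasurable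

theorem integrableOn_mul_rpow (hh : IsLogConcaveMaxAtZero h) {R s : ℝ} (hR : 0 < R)
    (hRlt : h R < h 0) (hs : 0 < s) : IntegrableOn (fun r => h r * r ^ (s - 1)) (Ioi 0) := by
  obtain ⟨C, b, hb, hbound⟩ := hh.exists_exp_bound hR hRlt
  refine Integrable.mono' (integrableOn_exp_mul_rpow C hb hs)
    (hh.aestronglyMeasurable_mul_rpow s) ?_
  filter_upwards [ae_restrict_mem measurableSet_Ioi] with r hr
  have hrpow : 0 ≤ r ^ (s - 1) := rpow_nonneg (le_of_lt hr) _
  rw [norm_mul, Real.norm_of_nonneg (hh.nonneg r), Real.norm_of_nonneg hrpow]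
  exact mul_le_mul_of_nonneg_right (hbound r (le_of_lt hr)) hrpow

theorem exists_lt_apply_zero (hh : IsLogConcaveMaxAtZero h) (h0 : 0 < h 0) (hp : 0 ≤ p)
    (hip : IntegrableOn (fun r => h r * r ^ (p - 1)) (Ioi 0)) : ∃ R, 0 < R ∧ h R < h 0 := by
  by_contra! hconst
  have hint : IntegrableOn (fun r : ℝ => h 0 * r ^ (p - 1)) (Ioi 1) := by
    refine (hip.mono_set (Ioi_subset_Ioi zero_le_one)).congr_fun (fun r hr => ?_) measurableSet_Ioi
    dsimp only
    rw [le_antisymm (hh.le_apply_zero r) (hconst r (zero_lt_one.trans hr))]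
  have := (integrableOn_Ioi_rpow_iff zero_lt_one).1
    ((integrable_const_mul_iff (IsUnit.mk0 _ h0.ne') _).1 hint)
  linarith

theorem integrableOn_mul_rpow_of_integrableOn (hh : IsLogConcaveMaxAtZero h) (h0 : 0 < h 0)
    (hp : 0 ≤ p) (hip : IntegrableOn (fun r => h r * r ^ (p - 1)) (Ioi 0)) {s : ℝ} (hs : 0 < s) :
    IntegrableOn (fun r => h r * r ^ (s - 1)) (Ioi 0) :=
  let ⟨_, hR, hRlt⟩ := hh.exists_lt_apply_zero h0 hp hip
  hh.integrableOn_mul_rpow hR hRlt hs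

theorem div_le_radialMoment_of_le (hh : IsLogConcaveMaxAtZero h) (hp : 0 < p) (hpq : p ≤ q)
    (hip : IntegrableOn (fun r => h r * r ^ (p - 1)) (Ioi 0))
    (hiq : IntegrableOn (fun r => h r * r ^ (q - 1)) (Ioi 0))
    (hmem : h 0 / p ≤ radialMoment h p) : h 0 / q ≤ radialMoment h q := by
  have := radialMoment_sub_div_le_of_le hp hpq (fun r _ => hh.nonneg r)
    (fun r _ => hh.le_apply_zero r) hip hiq
  linarith

theorem mul_div_le_radialMoment (hh : IsLogConcaveMaxAtZero h) (hp : 0 < p) (hpq : p ≤ q)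
    (hint : ∀ s : ℝ, 0 < s → IntegrableOn (fun r => h r * r ^ (s - 1)) (Ioi 0))
    (hmem : h 0 / q ≤ radialMoment h q) :
    Gamma (1 + p) / Gamma (1 + q) ^ (p / q) * (h 0 / p) ≤ radialMoment h p := by
  have hq : 0 < q := hp.trans_le hpq
  have hΓ : 0 < Gamma (1 + q) := Gamma_pos_of_pos (by linarith)
  -- `b` makes the `q`-th moments of `h 0 · e^(-b r)` and `h 0 · 1_(0,1]` agree
  set b := Gamma (1 + q) ^ (1 / q)
  have hb : 0 < b := rpow_pos_of_pos hΓ _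
  have hbq : b ^ q = Gamma (1 + q) := by
    rw [← rpow_mul hΓ.le, one_div_mul_cancel hq.ne', rpow_one]
  have hbp : b ^ p = Gamma (1 + q) ^ (p / q) := by
    rw [← rpow_mul hΓ.le, one_div_mul_eq_div]
  set H : ℝ → ℝ := fun r => h 0 * exp (-(b * r))
  have hHq : radialMoment H q = h 0 / q := by
    rw [radialMoment_exp _ hb hq, hbq, add_comm, Gamma_add_one hq.ne']
    field_simp
  have hHp : radialMoment H p = Gamma (1 + p) / Gamma (1 + q) ^ (p / q) * (h 0 / p) := by
    rw [radialMoment_exp _ hb hp, hbp, add_comm 1 p, Gamma_add_one hp.ne']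
    field_simp
  have hcross : 0 ≤ radialMoment (h - H) p := by
    refine radialMoment_nonneg_of_sign_change hpq
      (fun r r' hr hrr' hle =>
        sub_nonneg.2 (hh.mul_exp_le_of_mul_exp_le hr hrr' (sub_nonneg.1 hle)))
      (integrableOn_sub_mul_rpow (hint p hp) (integrableOn_exp_mul_rpow _ hb hp))
      (integrableOn_sub_mul_rpow (hint q hq) (integrableOn_exp_mul_rpow _ hb hq)) ?_
    rw [radialMoment_sub (hint q hq) (integrableOn_exp_mul_rpow _ hb hq), hHq]
    linarith
  rw [radialMoment_sub (hint p hp) (integrableOn_exp_mul_rpow _ hb hp), hHp] at hcross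
  linarith

end IsLogConcaveMaxAtZero

theorem ball_bodies_inclusions_general (n : ℕ)
    (g : EuclideanSpace ℝ (Fin n) → ℝ)
    (hg_nn : ∀ x, 0 ≤ g x)
    (hg_lc : ∀ x y : EuclideanSpace ℝ (Fin n), ∀ l : ℝ, 0 < l → l < 1 →
      g x ^ l * g y ^ (1 - l) ≤ g (l • x + (1 - l) • y))
    (hg0 : 0 < g 0)
    (hgmax : ∀ x, g x ≤ g 0)
    (p q : ℝ) (hp : 0 < p) (hpq : p ≤ q)
    (Kt : ℝ → Set (EuclideanSpace ℝ (Fin n)))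
    (hKt : ∀ s : ℝ, 0 < s →
      Kt s = {x | g 0 / s ≤ ∫ r in Ioi (0:ℝ), g (r • x) * r ^ (s - 1)}) :
    (Real.Gamma (1 + p) ^ (1/p) / Real.Gamma (1 + q) ^ (1/q)) • Kt q ⊆ Kt p ∧
    Kt p ⊆ Kt q := by
  have hq : 0 < q := hp.trans_le hpq
  have hg : IsLogConcaveMaxAtZero g := ⟨hg_nn, hgmax, hg_lc⟩
  have hmem : ∀ s, 0 < s → ∀ x, x ∈ Kt s ↔ g 0 / s ≤ radialMoment (fun r => g (r • x)) s :=
    fun s hs x => by rw [hKt s hs]; rfl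
  have hint : ∀ s, 0 < s → ∀ x ∈ Kt s, ∀ t : ℝ, 0 < t →
      IntegrableOn (fun r => g (r • x) * r ^ (t - 1)) (Ioi 0) := fun s hs x hx t ht =>
    (hg.comp_smul x).integrableOn_mul_rpow_of_integrableOn (by simpa only [zero_smul] using hg0)
      hs.le (integrableOn_of_div_le_radialMoment hg0 hs ((hmem s hs x).1 hx)) ht
  refine ⟨?_, fun x hx => ?_⟩
  · rintro _ ⟨y, hy, rfl⟩
    set c := Gamma (1 + p) ^ (1 / p) / Gamma (1 + q) ^ (1 / q)
    have hc : 0 < c := by positivity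
    have hcp : c ^ p = Gamma (1 + p) / Gamma (1 + q) ^ (p / q) := by
      rw [div_rpow (by positivity) (by positivity), ← rpow_mul (by positivity),
        ← rpow_mul (by positivity), one_div_mul_cancel hp.ne', rpow_one, one_div_mul_eq_div]
    have hmom := (hg.comp_smul y).mul_div_le_radialMoment hp hpq (hint q hq y hy)
      (by simpa only [zero_smul] using (hmem q hq y).1 hy)
    rw [← hcp, zero_smul] at hmom
    have hscale : radialMoment (fun r => g (r • c • y)) p =
        c ^ (-p) * radialMoment (fun r => g (r • y)) p := by
      simp_rw [smul_smul, mul_comm _ c]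
      exact radialMoment_comp_mul_left (fun r => g (r • y)) p hc
    rw [hmem p hp, hscale]
    calc g 0 / p = c ^ (-p) * (c ^ p * (g 0 / p)) := by
          rw [rpow_neg hc.le, inv_mul_cancel_left₀ (rpow_pos_of_pos hc p).ne']
      _ ≤ _ := mul_le_mul_of_nonneg_left hmom (rpow_nonneg hc.le _)
  · have hmom := (hg.comp_smul x).div_le_radialMoment_of_le hp hpq (hint p hp x hx p hp)
      (hint p hp x hx q hq) (by simpa only [zero_smul] using (hmem p hp x).1 hx)
    rw [zero_smul] at hmom
    exact (hmem q hq x).2 hmom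

theorem ball_bodies_inclusions (n : ℕ)
    (g : EuclideanSpace ℝ (Fin n) → ℝ)
    (hg_nn : ∀ x, 0 ≤ g x)
    (hg_int : Integrable g)
    (hg_lc : ∀ x y : EuclideanSpace ℝ (Fin n), ∀ l : ℝ, 0 < l → l < 1 →
      g x ^ l * g y ^ (1 - l) ≤ g (l • x + (1 - l) • y))
    (hg0 : 0 < g 0)
    (hgmax : ∀ x, g x ≤ g 0)
    (p q : ℝ) (hp : 0 < p) (hpq : p ≤ q)
    (Kt : ℝ → Set (EuclideanSpace ℝ (Fin n)))
    (hKt : ∀ s : ℝ, 0 < s →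
      Kt s = {x | g 0 / s ≤ ∫ r in Ioi (0:ℝ), g (r • x) * r ^ (s - 1)}) :
    (Real.Gamma (1 + p) ^ (1/p) / Real.Gamma (1 + q) ^ (1/q)) • Kt q ⊆ Kt p ∧
    Kt p ⊆ Kt q :=
  ball_bodies_inclusions_general n g hg_nn hg_lc hg0 hgmax p q hp hpq Kt hKt
end
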